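/- arXiv:1208.5216 — 3 statements merged into one kernel-verified Lean document; each statement's English description precedes it below -/
import Mathlib

section
/- In the direct product construction of a DSS from two perfect regular DSSs over coprime moduli v and v', where the first DSS also forms a DF(v,m,λ) and the second forms a DF(v',m',λ'), every outer difference (a,b) with a ≠ 0 and b ≠ 0 occurs exactly ρρ' + ρλ' + ρ'λ times in the product family {Q_i × Q'_j}. -/
/-- Number of occurrences of `d` as an outer difference (difference of elements
from distinct member sets) in the family `Q`. -/
def outerCount {G ι : Type*} [AddCommGroup G] [DecidableEq G] [Fintype ι] [DecidableEq ι]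
    (Q : ι → Finset G) (d : G) : ℕ :=
  ∑ i : ι, ∑ j : ι, if i = j then 0 else ((Q i ×ˢ Q j).filter (fun p => p.1 - p.2 = d)).card

/-- Number of occurrences of `d` as an inner difference (difference of two distinct
elements of a single member set) in the family `Q`. -/
def innerCount {G ι : Type*} [AddCommGroup G] [DecidableEq G] [Fintype ι]
    (Q : ι → Finset G) (d : G) : ℕ :=
  ∑ i : ι, ((Q i ×ˢ Q i).filter (fun p => p.1 - p.2 = d ∧ p.1 ≠ p.2)).card

open Finset

/-
Count the ordered pairs with difference `d` between any two member sets, including a set with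
itself. For a family with outer index `ρ` and inner index `λ` this total is `ρ + λ` at every
`d ≠ 0`, since the diagonal pairs `x = y` only contribute to `d = 0`. The total and the diagonal
part are both multiplicative for the product family `Q i × Q' j`, so its outer count at `(a, b)`
is `(ρ + λ)(ρ' + λ') - λλ'`.
-/

section DiffCount

variable {G H ι κ : Type*} [AddCommGroup G] [AddCommGroup H] [DecidableEq G] [DecidableEq H]
  [Fintype ι] [Fintype κ]

def diffCount (s t : Finset G) (d : G) : ℕ :=
  #{p ∈ s ×ˢ t | p.1 - p.2 = d}

theorem diffCount_product (s t : Finset G) (s' t' : Finset H) (a : G) (b : H) :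
    diffCount (s ×ˢ s') (t ×ˢ t') (a, b) = diffCount s t a * diffCount s' t' b := by
  rw [diffCount, diffCount, diffCount, ← card_product]
  refine card_bij' (fun p _ => ((p.1.1, p.2.1), (p.1.2, p.2.2)))
    (fun p _ => ((p.1.1, p.2.1), (p.1.2, p.2.2))) ?_ ?_ (fun _ _ => rfl) (fun _ _ => rfl) <;>
  · intro p hp
    simp only [mem_filter, mem_product, Prod.ext_iff, Prod.fst_sub, Prod.snd_sub] at hp ⊢
    tauto

theorem innerCount_eq_sum_diffCount (Q : ι → Finset G) {d : G} (hd : d ≠ 0) :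
    innerCount Q d = ∑ i, diffCount (Q i) (Q i) d := by
  refine sum_congr rfl fun i _ => congrArg card (filter_congr fun p _ => ?_)
  refine and_iff_left_of_imp fun h he => hd ?_
  rw [← h, he, sub_self]

theorem outerCount_add_sum_diffCount_self [DecidableEq ι] (Q : ι → Finset G) (d : G) :
    outerCount Q d + ∑ i, diffCount (Q i) (Q i) d = ∑ i, ∑ j, diffCount (Q i) (Q j) d := by
  rw [outerCount, ← sum_add_distrib]
  refine sum_congr rfl fun i _ => ?_
  have hdiag : diffCount (Q i) (Q i) d = ∑ j, if i = j then diffCount (Q i) (Q j) d else 0 := by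
    simp
  rw [hdiag, ← sum_add_distrib]
  refine sum_congr rfl fun j _ => ?_
  split_ifs <;> simp [diffCount]

theorem outerCount_add_innerCount [DecidableEq ι] (Q : ι → Finset G) {d : G} (hd : d ≠ 0) :
    outerCount Q d + innerCount Q d = ∑ i, ∑ j, diffCount (Q i) (Q j) d := by
  rw [innerCount_eq_sum_diffCount Q hd, outerCount_add_sum_diffCount_self]

theorem sum_diffCount_self_product (Q : ι → Finset G) (Q' : κ → Finset H) (a : G) (b : H) :
    ∑ ij : ι × κ, diffCount (Q ij.1 ×ˢ Q' ij.2) (Q ij.1 ×ˢ Q' ij.2) (a, b) =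
      (∑ i, diffCount (Q i) (Q i) a) * ∑ j, diffCount (Q' j) (Q' j) b := by
  simp only [diffCount_product, Fintype.sum_prod_type, sum_mul_sum]

theorem sum_sum_diffCount_product (Q : ι → Finset G) (Q' : κ → Finset H) (a : G) (b : H) :
    ∑ ij : ι × κ, ∑ kl : ι × κ, diffCount (Q ij.1 ×ˢ Q' ij.2) (Q kl.1 ×ˢ Q' kl.2) (a, b) =
      (∑ i, ∑ k, diffCount (Q i) (Q k) a) * ∑ j, ∑ l, diffCount (Q' j) (Q' l) b := by
  simp only [diffCount_product, Fintype.sum_prod_type, sum_mul_sum]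

end DiffCount

theorem stmt_2_general (v v' q q' ρ ρ' lam lam' : ℕ)
    (Q : Fin q → Finset (ZMod v)) (Q' : Fin q' → Finset (ZMod v'))
    (hQperf : ∀ d : ZMod v, d ≠ 0 → outerCount Q d = ρ)
    (hQdf : ∀ d : ZMod v, d ≠ 0 → innerCount Q d = lam)
    (hQ'perf : ∀ d : ZMod v', d ≠ 0 → outerCount Q' d = ρ')
    (hQ'df : ∀ d : ZMod v', d ≠ 0 → innerCount Q' d = lam') :
    ∀ a : ZMod v, ∀ b : ZMod v', a ≠ 0 → b ≠ 0 →
      outerCount (fun ij : Fin q × Fin q' => Q ij.1 ×ˢ Q' ij.2)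
        (a, b) = ρ * ρ' + ρ * lam' + ρ' * lam := by
  intro a b ha hb
  have hprod := outerCount_add_sum_diffCount_self
    (fun ij : Fin q × Fin q' => Q ij.1 ×ˢ Q' ij.2) (a, b)
  rw [sum_diffCount_self_product, sum_sum_diffCount_product, ← outerCount_add_innerCount Q ha,
    ← outerCount_add_innerCount Q' hb, ← innerCount_eq_sum_diffCount Q ha,
    ← innerCount_eq_sum_diffCount Q' hb, hQperf a ha, hQdf a ha, hQ'perf b hb,
    hQ'df b hb] at hprod
  linarith

theorem stmt_2 (v v' m m' q q' ρ ρ' lam lam' : ℕ) (hv : 0 < v) (hv' : 0 < v')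
    (hco : Nat.Coprime v v')
    (Q : Fin q → Finset (ZMod v)) (Q' : Fin q' → Finset (ZMod v'))
    (hQdisj : ∀ i j, i ≠ j → Disjoint (Q i) (Q j))
    (hQcard : ∀ i, (Q i).card = m)
    (hQperf : ∀ d : ZMod v, d ≠ 0 → outerCount Q d = ρ)
    (hQdf : ∀ d : ZMod v, d ≠ 0 → innerCount Q d = lam)
    (hQ'disj : ∀ i j, i ≠ j → Disjoint (Q' i) (Q' j))
    (hQ'card : ∀ i, (Q' i).card = m')
    (hQ'perf : ∀ d : ZMod v', d ≠ 0 → outerCount Q' d = ρ')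
    (hQ'df : ∀ d : ZMod v', d ≠ 0 → innerCount Q' d = lam') :
    ∀ a : ZMod v, ∀ b : ZMod v', a ≠ 0 → b ≠ 0 →
      outerCount (fun ij : Fin q × Fin q' => Q ij.1 ×ˢ Q' ij.2)
        (a, b) = ρ * ρ' + ρ * lam' + ρ' * lam :=
  stmt_2_general v v' q q' ρ ρ' lam lam' Q Q' hQperf hQdf hQ'perf hQ'df
end

section
/- If there exist a frequency hopping sequence FHS(v, v−ρ; q) (equivalently, a partition of Z_v into q sets in which every nonzero outer difference occurs at least ρ times) and a perfect DSS of index ρ' and redundancy rate e' over Z_{v'} whose blocks form a DF(v',K,λ'), then the family of sets S_{i,x} = {v'·a + x : a ∈ Q_i} over Z_{vv'}, taken over all blocks Q_i of the FHS and all points x used by the DSS over Z_{v'}, is a DSS of index min(ρe'v', v(λ'+ρ')) and redundancy rate e' over Z_{vv'} on qv'e' sets. -/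
/-!
Write `u ∈ ℤ/vv'` in mixed radix as `u = v'·a + x` with `a ∈ ℤ/v`, `x ∈ ℤ/v'`. Reduction mod `v'`
is an additive homomorphism `π` with `π u = x`, and `S (i, x)` is the copy of `Q i` in the fibre
of `π` over `x`.

If `π d = 0`, then `d = v'·c` with `c ≠ 0`, and for each `x ∈ P` the slice `(S (i, x))_i`
reproduces the outer differences `c` of the FHS: at least `ρ·|P|` occurrences.
If `π d = w ≠ 0`, no two elements of one `S (i, x)` differ by `d`, so the outer occurrences of `d`
are all pairs of the union `π⁻¹ P` with difference `d`. There are `v` times as many of these as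
pairs of `P` with difference `w`, and those are counted by the DSS and the DF together: `ρ' + λ'`.
-/

open Finset Function

section DifferenceCounts

variable {G ι : Type*} [AddCommGroup G] [DecidableEq G] [Fintype ι] [DecidableEq ι]

theorem card_filter_product_sub_eq (A B : Finset G) (d : G) :
    #{p ∈ A ×ˢ B | p.1 - p.2 = d} = #{a ∈ A | a - d ∈ B} := by
  refine card_nbij' Prod.fst (fun a => (a, a - d)) ?_ ?_ ?_ ?_
  · rintro ⟨a, b⟩ h
    simp only [coe_filter, mem_product] at h
    obtain ⟨⟨ha, hb⟩, rfl⟩ := h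
    simpa using And.intro ha hb
  · intro a h
    simpa using h
  · rintro ⟨a, b⟩ h
    simp only [coe_filter, mem_product] at h
    simp [← h.2]
  · intro a _
    rfl

theorem outerCount_add_innerCount_s3 {R : ι → Finset G} (hR : Pairwise (Disjoint on R)) {d : G}
    (hd : d ≠ 0) :
    outerCount R d + innerCount R d = #{a ∈ univ.biUnion R | a - d ∈ univ.biUnion R} := by
  have hsplit : ∀ i j, #{p ∈ R i ×ˢ R j | p.1 - p.2 = d} =
      (if i = j then 0 else #{p ∈ R i ×ˢ R j | p.1 - p.2 = d}) +
        if i = j then #{p ∈ R i ×ˢ R i | p.1 - p.2 = d ∧ p.1 ≠ p.2} else 0 := by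
    intro i j
    split_ifs with hij
    · subst hij
      rw [zero_add]
      congr 1
      exact filter_congr fun p _ => ⟨fun h => ⟨h, fun he => hd (by rw [← h, he, sub_self])⟩,
        And.left⟩
    · rfl
  have hunion : univ.biUnion R ×ˢ univ.biUnion R =
      univ.biUnion fun ij : ι × ι => R ij.1 ×ˢ R ij.2 := by
    ext; simp
  rw [← card_filter_product_sub_eq, hunion, filter_biUnion, card_biUnion]
  · rw [Fintype.sum_prod_type, sum_congr rfl fun i _ => sum_congr rfl fun j _ => hsplit i j]
    simp only [sum_add_distrib, sum_ite_eq, mem_univ, if_true]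
    rfl
  · rintro ⟨i, j⟩ - ⟨k, l⟩ - hne
    refine disjoint_filter_filter ?_
    obtain h | h : i ≠ k ∨ j ≠ l := by rw [← not_and_or]; simpa using hne
    · exact disjoint_product.2 (Or.inl (hR h))
    · exact disjoint_product.2 (Or.inr (hR h))

theorem outerCount_image {H : Type*} [AddCommGroup H] [DecidableEq H] (R : ι → Finset G)
    {f : G → H} (hf : Injective f) {c : G} {h : H} (hfc : ∀ a b, f a - f b = h ↔ a - b = c) :
    outerCount (fun i => (R i).image f) h = outerCount R c := by
  refine sum_congr rfl fun i _ => sum_congr rfl fun j _ => ?_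
  split_ifs
  · rfl
  · rw [← prodMap_image_product, filter_image,
      card_image_of_injective _ (hf.prodMap hf)]
    exact congrArg card (filter_congr fun p _ => hfc p.1 p.2)

theorem sum_outerCount_slice_le {κ : Type*} [Fintype κ] [DecidableEq κ]
    (R : ι × κ → Finset G) (d : G) :
    ∑ k, outerCount (fun i => R (i, k)) d ≤ outerCount R d := by
  unfold outerCount
  rw [sum_comm, Fintype.sum_prod_type]
  refine sum_le_sum fun i _ => sum_le_sum fun k _ => ?_
  rw [Fintype.sum_prod_type]
  refine sum_le_sum fun j _ => ?_
  refine le_of_eq_of_le ?_ (single_le_sum (fun l _ => Nat.zero_le _) (mem_univ k))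
  simp

end DifferenceCounts

def mixedRadix (v v' : ℕ) (a : ZMod v) (x : ZMod v') : ZMod (v * v') :=
  ((v' * a.val + x.val : ℕ) : ZMod (v * v'))

namespace mixedRadix

variable {v v' : ℕ}

theorem add_of_left_zero [NeZero v] (a b : ZMod v) (x : ZMod v') :
    mixedRadix v v' a 0 + mixedRadix v v' b x = mixedRadix v v' (a + b) x := by
  unfold mixedRadix
  rw [ZMod.val_zero, add_zero, ← Nat.cast_add, ZMod.natCast_eq_natCast_iff, mul_comm v v',
    ← add_assoc, ← mul_add]
  refine Nat.ModEq.add_right _ (Nat.ModEq.mul_left' _ ?_)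
  rw [ZMod.val_add]
  exact (Nat.mod_modEq _ _).symm

theorem sub_eq [NeZero v] (a b : ZMod v) (x : ZMod v') :
    mixedRadix v v' a x - mixedRadix v v' b x = mixedRadix v v' (a - b) 0 :=
  sub_eq_of_eq_add (by rw [add_of_left_zero, sub_add_cancel])

theorem castHom_apply [NeZero v'] (a : ZMod v) (x : ZMod v') :
    ZMod.castHom (dvd_mul_left v' v) (ZMod v') (mixedRadix v v' a x) = x := by
  unfold mixedRadix
  rw [map_natCast, Nat.cast_add, Nat.cast_mul, ZMod.natCast_self, zero_mul, zero_add,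
    ZMod.natCast_zmod_val]

variable [NeZero v] [NeZero v']

theorem val_eq (a : ZMod v) (x : ZMod v') :
    (mixedRadix v v' a x).val = v' * a.val + x.val := by
  refine ZMod.val_cast_of_lt ?_
  have := a.val_lt
  have := x.val_lt
  nlinarith

theorem injective : Injective fun p : ZMod v × ZMod v' => mixedRadix v v' p.1 p.2 := by
  rintro ⟨a, x⟩ ⟨b, y⟩ h
  have hval := congrArg ZMod.val h
  simp only [val_eq] at hval
  have hv' : 0 < v' := Nat.pos_of_neZero v'
  have hxy : x.val = y.val := by
    simpa [Nat.mul_add_mod, Nat.mod_eq_of_lt x.val_lt, Nat.mod_eq_of_lt y.val_lt]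
      using congrArg (· % v') hval
  have hab : a.val = b.val := Nat.eq_of_mul_eq_mul_left hv' (by omega)
  simp [ZMod.val_injective v hab, ZMod.val_injective v' hxy]

theorem eq_iff {a b : ZMod v} {x y : ZMod v'} :
    mixedRadix v v' a x = mixedRadix v v' b y ↔ a = b ∧ x = y :=
  (injective.eq_iff (a := (a, x)) (b := (b, y))).trans Prod.mk_inj

theorem bijective : Bijective fun p : ZMod v × ZMod v' => mixedRadix v v' p.1 p.2 :=
  (Fintype.bijective_iff_injective_and_card _).2 ⟨injective, by simp [ZMod.card]⟩

theorem card_filter_castHom_mem (T : Finset (ZMod v')) :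
    #{u : ZMod (v * v') | ZMod.castHom (dvd_mul_left v' v) (ZMod v') u ∈ T} = v * #T := by
  have himage : ({u | ZMod.castHom (dvd_mul_left v' v) (ZMod v') u ∈ T} : Finset _) =
      (univ ×ˢ T).image fun p => mixedRadix v v' p.1 p.2 := by
    ext u
    obtain ⟨⟨a, x⟩, rfl⟩ := bijective.2 u
    simp only [mem_filter, mem_univ, true_and, castHom_apply]
    exact (injective.mem_finset_image.trans (by simp : (a, x) ∈ univ ×ˢ T ↔ x ∈ T)).symm
  rw [himage, card_image_of_injective _ injective, card_product, card_univ, ZMod.card]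

end mixedRadix

section ProductFamily

variable {v v' : ℕ} {ι : Type*} (Q : ι → Finset (ZMod v)) (P : Finset (ZMod v'))

def productFamily (ix : ι × P) : Finset (ZMod (v * v')) :=
  (Q ix.1).image (mixedRadix v v' · ix.2)

local notation "π" => ZMod.castHom (dvd_mul_left v' v) (ZMod v')

variable [NeZero v']

theorem castHom_of_mem_productFamily {ix : ι × P} {u : ZMod (v * v')}
    (hu : u ∈ productFamily Q P ix) : π u = ix.2 := by
  obtain ⟨a, -, rfl⟩ := mem_image.1 hu
  exact mixedRadix.castHom_apply a _

variable [NeZero v]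

theorem pairwise_disjoint_productFamily (hQ : Pairwise (Disjoint on Q)) :
    Pairwise (Disjoint on productFamily Q P) := by
  rintro ⟨i, x⟩ ⟨j, y⟩ hne
  refine disjoint_left.2 fun u hu hu' => ?_
  obtain ⟨a, ha, rfl⟩ := mem_image.1 hu
  obtain ⟨b, hb, hba⟩ := mem_image.1 hu'
  obtain ⟨rfl, hyx⟩ := mixedRadix.eq_iff.1 hba
  obtain rfl : y = x := Subtype.ext hyx
  exact disjoint_left.1 (hQ fun hij => hne (Prod.ext hij rfl)) ha hb

variable [Fintype ι]

theorem biUnion_productFamily (hQ : ∀ a, ∃ i, a ∈ Q i) :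
    univ.biUnion (productFamily Q P) = ({u | π u ∈ P} : Finset (ZMod (v * v'))) := by
  ext u
  rw [mem_biUnion, mem_filter]
  obtain ⟨⟨a, x⟩, rfl⟩ := mixedRadix.bijective.2 u
  simp only [mem_univ, true_and, mixedRadix.castHom_apply]
  constructor
  · rintro ⟨ix, hu⟩
    rw [← mixedRadix.castHom_apply a x, castHom_of_mem_productFamily Q P hu]
    exact ix.2.2
  · intro hx
    obtain ⟨i, hi⟩ := hQ a
    exact ⟨(i, ⟨x, hx⟩), mem_image_of_mem _ hi⟩

variable [DecidableEq ι]

theorem outerCount_productFamily_slice (x : P) (c : ZMod v) :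
    outerCount (fun i => productFamily Q P (i, x)) (mixedRadix v v' c 0) = outerCount Q c := by
  refine outerCount_image Q (f := (mixedRadix v v' · x)) (fun a b h => ?_) fun a b => ?_
  · exact (mixedRadix.eq_iff.1 h).1
  · rw [mixedRadix.sub_eq, mixedRadix.eq_iff, and_iff_left rfl]

theorem mul_le_outerCount_productFamily {ρ : ℕ} (hQ : ∀ c, c ≠ 0 → ρ ≤ outerCount Q c)
    {d : ZMod (v * v')} (hd : d ≠ 0) (hπd : π d = 0) :
    ρ * #P ≤ outerCount (productFamily Q P) d := by
  obtain ⟨⟨c, w⟩, rfl⟩ := mixedRadix.bijective.2 d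
  obtain rfl : w = 0 := (mixedRadix.castHom_apply c w).symm.trans hπd
  have hc : c ≠ 0 := by
    rintro rfl
    exact hd (by simp [mixedRadix])
  calc ρ * #P = ∑ _x : P, ρ := by simp [mul_comm]
    _ ≤ ∑ x : P, outerCount (fun i => productFamily Q P (i, x)) (mixedRadix v v' c 0) := by
      refine sum_le_sum fun x _ => ?_
      rw [outerCount_productFamily_slice]
      exact hQ c hc
    _ ≤ outerCount (productFamily Q P) (mixedRadix v v' c 0) := sum_outerCount_slice_le _ _

theorem outerCount_productFamily (hQd : Pairwise (Disjoint on Q)) (hQ : ∀ a, ∃ i, a ∈ Q i)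
    {d : ZMod (v * v')} (hπd : π d ≠ 0) :
    outerCount (productFamily Q P) d = v * #{x ∈ P | x - π d ∈ P} := by
  have hinner : innerCount (productFamily Q P) d = 0 := by
    refine sum_eq_zero fun ix _ => card_eq_zero.2 (filter_eq_empty_iff.2 ?_)
    rintro ⟨u, u'⟩ hp ⟨rfl, -⟩
    obtain ⟨hu, hu'⟩ := mem_product.1 hp
    apply hπd
    rw [map_sub, castHom_of_mem_productFamily Q P hu, castHom_of_mem_productFamily Q P hu',
      sub_self]
  have hsum := outerCount_add_innerCount_s3 (pairwise_disjoint_productFamily Q P hQd)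
    (d := d) fun h => hπd (by rw [h, map_zero])
  rw [hinner, add_zero, biUnion_productFamily Q P hQ] at hsum
  rw [hsum, ← mixedRadix.card_filter_castHom_mem, filter_filter]
  congr 1
  ext u
  simp only [mem_filter, mem_univ, true_and, map_sub]

end ProductFamily

theorem stmt_3 (v v' q q' ρ ρ' lam' : ℕ) [NeZero v] (hv' : 0 < v')
    (Q : Fin q → Finset (ZMod v)) (Q' : Fin q' → Finset (ZMod v'))
    -- the FHS: a partition of Z_v into q sets every nonzero outer difference of which
    -- occurs at least ρ times
    (hQdisj : ∀ i j, i ≠ j → Disjoint (Q i) (Q j))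
    (hQcover : ∀ x : ZMod v, ∃ i, x ∈ Q i)
    (hQidx : ∀ d : ZMod v, d ≠ 0 → ρ ≤ outerCount Q d)
    -- the perfect DSS over Z_{v'} forming a DF(v',K,λ')
    (hQ'disj : ∀ i j, i ≠ j → Disjoint (Q' i) (Q' j))
    (hQ'perf : ∀ d : ZMod v', d ≠ 0 → outerCount Q' d = ρ')
    (hQ'df : ∀ d : ZMod v', d ≠ 0 → innerCount Q' d = lam') :
    -- the set of points used by the DSS over Z_{v'}; its cardinality is e'·v'
    let P : Finset (ZMod v') := Finset.univ.biUnion Q'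
    let S : Fin q × {x : ZMod v' // x ∈ P} → Finset (ZMod (v * v')) := fun ix =>
      (Q ix.1).image (fun a => ((v' * a.val + ix.2.val.val : ℕ) : ZMod (v * v')))
    -- the resulting family is a DSS of index min(ρ e'v', v(λ'+ρ')), of redundancy rate
    -- e' (i.e., it uses e'·v·v' = v·|P| symbols of Z_{vv'}), on q·v'·e' = q·|P| sets
    (∀ a b, a ≠ b → Disjoint (S a) (S b)) ∧
    (Finset.univ.biUnion S).card = v * P.card ∧
    Fintype.card (Fin q × {x : ZMod v' // x ∈ P}) = q * P.card ∧
    (∀ d : ZMod (v * v'), d ≠ 0 →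
      min (ρ * P.card) (v * (lam' + ρ')) ≤ outerCount S d) := by
  intro P S
  have : NeZero v' := ⟨hv'.ne'⟩
  have hQ : Pairwise (Disjoint on Q) := fun i j => hQdisj i j
  have hS : S = productFamily Q P := rfl
  rw [hS]
  refine ⟨fun a b h => pairwise_disjoint_productFamily Q P hQ h, ?_, by simp, ?_⟩
  · rw [biUnion_productFamily Q P hQcover, mixedRadix.card_filter_castHom_mem]
  intro d hd
  by_cases hπd : ZMod.castHom (dvd_mul_left v' v) (ZMod v') d = 0
  · exact (min_le_left _ _).trans (mul_le_outerCount_productFamily Q P hQidx hd hπd)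
  · refine (min_le_right _ _).trans_eq ?_
    rw [outerCount_productFamily Q P hQ hQcover hπd, ← outerCount_add_innerCount_s3
      (fun i j => hQ'disj i j) hπd, hQ'perf _ hπd, hQ'df _ hπd, add_comm]
end

section
/- Let v = 4n+3 be a prime. The set of nonzero quadratic residues of F_v, partitioned into (2n+1)/m disjoint m-subsets each closed under multiplication by an appropriate subgroup (the Paley-type partition), yields a perfect regular DSS(4n+3, m, (2n+1)/m, (2n+1−m)/2) whenever m divides 2n+1. In particular, every nonzero element of F_v occurs exactly (2n+1−m)/2 times as an outer difference between distinct parts. -/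
open Finset

section OuterCount

variable {G ι : Type*} [AddCommGroup G] [DecidableEq G] [Fintype ι] [DecidableEq ι]

theorem outerCount_neg (Q : ι → Finset G) (d : G) : outerCount Q (-d) = outerCount Q d := by
  unfold outerCount
  rw [sum_comm]
  refine sum_congr rfl fun i _ => sum_congr rfl fun j _ => ?_
  by_cases hij : i = j
  · simp [hij]
  rw [if_neg (Ne.symm hij), if_neg hij, ← image_swap_product, filter_image,
    card_image_of_injective _ Prod.swap_injective]
  congr 1
  refine filter_congr fun p _ => ?_
  simp only [Prod.fst_swap, Prod.snd_swap, ← neg_sub p.1, neg_inj]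

theorem outerCount_map_of_image_eq (Q : ι → Finset G) (σ : Equiv.Perm ι) (φ : G →+ G)
    (hφ : Function.Injective φ) (hQ : ∀ i, Q (σ i) = (Q i).image φ) (d : G) :
    outerCount Q (φ d) = outerCount Q d := by
  unfold outerCount
  rw [← Equiv.sum_comp σ]
  refine sum_congr rfl fun i _ => ?_
  rw [← Equiv.sum_comp σ]
  refine sum_congr rfl fun j _ => ?_
  by_cases hij : i = j
  · simp [hij]
  rw [if_neg hij, if_neg (σ.injective.ne hij), hQ i, hQ j, ← prodMap_image_product, filter_image,
    card_image_of_injective _ (hφ.prodMap hφ)]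
  congr 1
  refine filter_congr fun p _ => ?_
  simp only [Prod.map_fst, Prod.map_snd, ← map_sub, hφ.eq_iff]

theorem outerCount_zero_of_pairwise_disjoint (Q : ι → Finset G)
    (hQ : ∀ i j, i ≠ j → Disjoint (Q i) (Q j)) : outerCount Q 0 = 0 := by
  refine sum_eq_zero fun i _ => sum_eq_zero fun j _ => ?_
  split_ifs with hij
  · rfl
  refine card_eq_zero.2 (filter_eq_empty_iff.2 ?_)
  rintro ⟨a, b⟩ hab hd
  rw [mem_product] at hab
  exact disjoint_left.1 (hQ i j hij) hab.1 (sub_eq_zero.1 hd ▸ hab.2)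

theorem sum_outerCount [Fintype G] (Q : ι → Finset G) {m : ℕ} (hQ : ∀ i, #(Q i) = m) :
    ∑ d, outerCount Q d = Fintype.card ι * ((Fintype.card ι - 1) * (m * m)) := by
  have hpair : ∀ i j, ∑ d : G,
      (if i = j then 0 else #((Q i ×ˢ Q j).filter (fun p => p.1 - p.2 = d)))
      = if i = j then 0 else m * m := fun i j => by
    split_ifs
    · exact sum_const_zero
    · rw [← card_eq_sum_card_fiberwise fun _ _ => mem_univ _, card_product, hQ, hQ]
  have hrow : ∀ i, ∑ j : ι, (if i = j then 0 else m * m) = (Fintype.card ι - 1) * (m * m) :=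
    fun i => by
      simp_rw [sum_ite, sum_const_zero, zero_add, sum_const, ← ne_eq, filter_ne,
        card_erase_of_mem (mem_univ _), card_univ, smul_eq_mul]
  calc ∑ d, outerCount Q d = ∑ i : ι, ∑ j : ι, if i = j then 0 else m * m := by
        unfold outerCount
        rw [sum_comm]
        exact sum_congr rfl fun i _ => sum_comm.trans (sum_congr rfl fun j _ => hpair i j)
    _ = _ := by simp_rw [hrow, sum_const, card_univ, smul_eq_mul]

end OuterCount

section PowPart

variable {M : Type*} [CommMonoid M] [DecidableEq M] {g : M} {q m : ℕ}

def powPart (g : M) (q m i : ℕ) : Finset M := (range m).image fun t => g ^ (i + q * t)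

theorem mem_powPart (hg : IsPrimitiveRoot g (q * m)) (hm : 0 < m) {i : ℕ} (hi : i < q) {x : M} :
    x ∈ powPart g q m i ↔ ∃ s, s % q = i ∧ g ^ s = x := by
  simp only [powPart, mem_image, mem_range]
  constructor
  · rintro ⟨t, -, rfl⟩
    exact ⟨i + q * t, by rw [Nat.add_mul_mod_self_left, Nat.mod_eq_of_lt hi], rfl⟩
  · rintro ⟨s, hs, rfl⟩
    refine ⟨s / q % m, Nat.mod_lt _ hm, ?_⟩
    rw [← hs, ← Nat.mod_mul, hg.eq_orderOf, pow_mod_orderOf]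

theorem card_powPart (hg : IsPrimitiveRoot g (q * m)) {i : ℕ} (hi : i < q) :
    #(powPart g q m i) = m := by
  have hlt : ∀ t < m, i + q * t < q * m := fun t ht => by nlinarith
  rw [powPart, card_image_of_injOn, card_range]
  intro a ha b hb hab
  have hexp := hg.pow_inj (hlt a (mem_range.1 ha)) (hlt b (mem_range.1 hb)) hab
  exact Nat.eq_of_mul_eq_mul_left (Nat.zero_lt_of_lt hi) (Nat.add_left_cancel hexp)

theorem disjoint_powPart (hg : IsPrimitiveRoot g (q * m)) (hm : 0 < m) {i j : ℕ} (hi : i < q)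
    (hj : j < q) (hij : i ≠ j) : Disjoint (powPart g q m i) (powPart g q m j) := by
  rw [disjoint_left]
  intro x hx hx'
  obtain ⟨s, rfl, rfl⟩ := (mem_powPart hg hm hi).1 hx
  obtain ⟨s', rfl, hss'⟩ := (mem_powPart hg hm hj).1 hx'
  have hmod : s' ≡ s [MOD q * m] := by
    rw [hg.eq_orderOf]
    exact (hg.isOfFinOrder (Nat.mul_ne_zero (by omega) hm.ne')).pow_eq_pow_iff_modEq.1 hss'
  exact hij (hmod.of_mul_right m).symm

theorem powPart_succ_mod (hg : IsPrimitiveRoot g (q * m)) (hm : 0 < m) {i : ℕ} (hi : i < q) :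
    powPart g q m ((i + 1) % q) = (powPart g q m i).image (g * ·) := by
  have hinj : Function.Injective (g * ·) :=
    (hg.isUnit (Nat.mul_ne_zero (by omega) hm.ne')).mul_right_injective
  refine (eq_of_subset_of_card_le ?_ ?_).symm
  · intro x hx
    obtain ⟨y, hy, rfl⟩ := mem_image.1 hx
    obtain ⟨s, rfl, rfl⟩ := (mem_powPart hg hm hi).1 hy
    exact (mem_powPart hg hm (Nat.mod_lt _ (by omega))).2
      ⟨s + 1, by simp [Nat.add_mod], pow_succ' g s⟩
  · rw [card_image_of_injective _ hinj, card_powPart hg hi,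
      card_powPart hg (Nat.mod_lt _ (by omega))]

end PowPart

theorem IsPrimitiveRoot.sq {M : Type*} [CommMonoid M] {u : M} {k : ℕ}
    (hu : IsPrimitiveRoot u (2 * k)) : IsPrimitiveRoot (u ^ 2) k := by
  simpa using hu.pow_of_dvd two_ne_zero (dvd_mul_right 2 _)

theorem apply_pow_mul_eq_of_neg_of_sq {R β : Type*} [Monoid R] [HasDistribNeg R] {f : R → β}
    {u : R} {k : ℕ} (hu : u ^ (2 * k + 1) = -1) (hneg : ∀ x, f (-x) = f x)
    (hsq : ∀ x, f (u ^ 2 * x) = f x) (a : ℕ) (x : R) : f (u ^ a * x) = f x := by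
  have hsq_pow : ∀ b x, f ((u ^ 2) ^ b * x) = f x := by
    intro b
    induction b with
    | zero => simp
    | succ b ih => intro x; rw [pow_succ', mul_assoc, hsq, ih]
  have hmul : ∀ x, f (u * x) = f x := fun x => by
    have : (u ^ 2) ^ (k + 1) * x = -(u * x) := by
      rw [← pow_mul, mul_add, mul_one, pow_succ, hu, mul_assoc, neg_one_mul]
    rw [← hneg, ← this, hsq_pow]
  induction a generalizing x with
  | zero => simp
  | succ a ih => rw [pow_succ, mul_assoc, ih, hmul]

section FiniteField

variable {F : Type*} [Field F] [Fintype F] [DecidableEq F] {u : F} {q m : ℕ}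

theorem outerCount_powPart_eq_outerCount_one [NeZero q] (hu : IsPrimitiveRoot u (2 * (q * m)))
    (hodd : Odd (q * m)) (hcard : Fintype.card F = 2 * (q * m) + 1) {d : F} (hd : d ≠ 0) :
    outerCount (fun i : Fin q => powPart (u ^ 2) q m i) d
      = outerCount (fun i : Fin q => powPart (u ^ 2) q m i) 1 := by
  have hqm : q * m ≠ 0 := hodd.pos.ne'
  have hm : 0 < m := Nat.pos_of_ne_zero (right_ne_zero_of_mul hqm)
  have hneg_one : u ^ (q * m) = -1 := by
    refine IsPrimitiveRoot.eq_neg_one_of_two_right ?_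
    simpa [hqm] using hu.pow_of_dvd hqm (dvd_mul_left _ 2)
  obtain ⟨k, hk⟩ := hodd
  have hshift : ∀ i : Fin q, powPart (u ^ 2) q m ↑(i + 1)
      = (powPart (u ^ 2) q m i).image (AddMonoidHom.mulLeft (u ^ 2)) := fun i => by
    rw [Fin.val_add, Fin.val_one', Nat.add_mod_mod]
    exact powPart_succ_mod hu.sq hm i.isLt
  have hinj : Function.Injective (AddMonoidHom.mulLeft (u ^ 2)) :=
    mul_right_injective₀ (pow_ne_zero 2 (hu.ne_zero (by omega)))
  have : NeZero (2 * (q * m)) := ⟨by omega⟩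
  obtain ⟨a, -, rfl⟩ := hu.eq_pow_of_pow_eq_one (ξ := d) (by
    rw [← FiniteField.pow_card_sub_one_eq_one d hd, hcard, Nat.add_sub_cancel])
  rw [← mul_one (u ^ a)]
  refine apply_pow_mul_eq_of_neg_of_sq (hk ▸ hneg_one) (outerCount_neg _)
    (fun x => outerCount_map_of_image_eq _ (Equiv.addRight 1) _ hinj hshift x) a 1

theorem powPart_perfect_regular [NeZero q] (hu : IsPrimitiveRoot u (2 * (q * m)))
    (hodd : Odd (q * m)) (hcard : Fintype.card F = 2 * (q * m) + 1) :
    let P : Fin q → Finset F := fun i => powPart (u ^ 2) q m i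
    (∀ i j, i ≠ j → Disjoint (P i) (P j)) ∧ (∀ i, #(P i) = m) ∧
      ∀ d : F, d ≠ 0 → outerCount P d = (q * m - m) / 2 := by
  intro P
  have hm : 0 < m := Nat.pos_of_ne_zero (right_ne_zero_of_mul hodd.pos.ne')
  have hdisj : ∀ i j, i ≠ j → Disjoint (P i) (P j) := fun i j hij =>
    disjoint_powPart hu.sq hm i.isLt j.isLt (Fin.val_ne_of_ne hij)
  have hcardP : ∀ i, #(P i) = m := fun i => card_powPart hu.sq i.isLt
  have hconst : ∀ x ≠ 0, outerCount P x = outerCount P 1 := fun x hx =>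
    outerCount_powPart_eq_outerCount_one hu hodd hcard hx
  refine ⟨hdisj, hcardP, fun d hd => ?_⟩
  have hsum : ∑ x, outerCount P x = 2 * (q * m) * outerCount P 1 := by
    rw [← add_sum_erase _ _ (mem_univ 0), outerCount_zero_of_pairwise_disjoint P hdisj, zero_add,
      sum_congr rfl fun x hx => hconst x (ne_of_mem_erase hx),
      sum_const, card_erase_of_mem (mem_univ _), card_univ, hcard, smul_eq_mul, Nat.add_sub_cancel]
  have htotal : q * ((q - 1) * (m * m)) = q * m * (q * m - m) := by
    rw [← Nat.sub_one_mul, mul_mul_mul_comm, mul_assoc]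
  rw [sum_outerCount P hcardP, Fintype.card_fin, htotal] at hsum
  have : 2 * outerCount P 1 = q * m - m :=
    Nat.eq_of_mul_eq_mul_left hodd.pos (by rw [hsum]; ring)
  rw [hconst d hd]
  omega

end FiniteField

theorem stmt_16 (n m p : ℕ) (hp : p = 4 * n + 3) (hprime : p.Prime)
    (hm : m ∣ 2 * n + 1)
    (α : (ZMod p)ˣ) (hα : ∀ x : (ZMod p)ˣ, x ∈ Subgroup.zpowers α) :
    -- the Paley-type partition of the nonzero quadratic residues into q = (2n+1)/m
    -- cosets of the subgroup of index q of the cyclic group of quadratic residues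
    let q : ℕ := (2 * n + 1) / m
    let Q : Fin q → Finset (ZMod p) := fun i =>
      (Finset.range m).image (fun t => ((α : ZMod p)) ^ (2 * (i : ℕ) + 2 * q * t))
    -- it is a perfect regular DSS(4n+3, m, (2n+1)/m, (2n+1−m)/2)
    (∀ i j, i ≠ j → Disjoint (Q i) (Q j)) ∧
    (∀ i, (Q i).card = m) ∧
    (∀ d : ZMod p, d ≠ 0 → outerCount Q d = (2 * n + 1 - m) / 2) := by
  subst hp
  have := Fact.mk hprime
  intro q Q
  have hqm : q * m = 2 * n + 1 := Nat.div_mul_cancel hm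
  have : NeZero q := ⟨fun h => by rw [h, zero_mul] at hqm; omega⟩
  have horder : orderOf α = 2 * (q * m) := by
    rw [orderOf_eq_card_of_forall_mem_zpowers hα, Nat.card_eq_fintype_card, ZMod.card_units, hqm]
    omega
  have hu : IsPrimitiveRoot (α : ZMod (4 * n + 3)) (2 * (q * m)) :=
    IsPrimitiveRoot.coe_units_iff.2 (horder ▸ IsPrimitiveRoot.orderOf α)
  have hcard : Fintype.card (ZMod (4 * n + 3)) = 2 * (q * m) + 1 := by
    rw [ZMod.card, hqm]
    ring
  have hQ : Q = fun i : Fin q => powPart ((α : ZMod (4 * n + 3)) ^ 2) q m i :=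
    funext fun i => by simp only [Q, powPart, ← pow_mul, mul_add, mul_assoc]
  rw [hQ, ← hqm]
  exact powPart_perfect_regular hu (hqm ▸ odd_two_mul_add_one n) hcard
end
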